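/- If π* ∈ Π(n,m,C) has Sinkhorn form (π*)_{i,j} = a_i exp(M_{i,j}/ε) b_j with a, b positive, and σ* ∈ Π(n,m,C), then the cross entropy H(σ*, π*) := −∑_{i,j} σ*_{i,j} log(π*)_{i,j} satisfies H(σ*, π*) = −s(C) + (1/ε)[Tr((π*)ᵀM) + εH(π*) − Tr((σ*)ᵀM)], where s(C) = ∑_j C_j and H(π) = −∑ π_{i,j}(log π_{i,j} − 1). -/

import Mathlib

/-!
Taking logarithms of the Sinkhorn form, `log π*ᵢⱼ = log aᵢ + Mᵢⱼ / ε + log bⱼ`. Against any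
matrix `τ`, the `a`- and `b`-parts of `∑ τᵢⱼ log π*ᵢⱼ` only see the row and column sums of `τ`,
which are the same for `σ*` and `π*`; so the two cross entropies differ only in their `M`-parts.
-/

open Finset Real

variable {ι κ : Type*} [Fintype ι] [Fintype κ]

theorem log_mul_exp_mul {x y : ℝ} (hx : x ≠ 0) (hy : y ≠ 0) (t : ℝ) :
    log (x * exp t * y) = log x + t + log y := by
  rw [log_mul (mul_ne_zero hx (exp_pos t).ne') hy, log_mul hx (exp_pos t).ne', log_exp]

theorem sum_sum_mul_add_add (τ w : ι → κ → ℝ) (u : ι → ℝ) (v : κ → ℝ) :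
    ∑ i, ∑ j, τ i j * (u i + w i j + v j) =
      ∑ i, (∑ j, τ i j) * u i + ∑ i, ∑ j, τ i j * w i j + ∑ j, (∑ i, τ i j) * v j := by
  simp only [mul_add, sum_add_distrib, sum_mul]
  rw [sum_comm (f := fun i j => τ i j * v j)]

theorem sum_sum_mul_log_of_eq_mul_exp_mul {p τ M : ι → κ → ℝ} {a : ι → ℝ} {b : κ → ℝ}
    {ε : ℝ} (ha : ∀ i, a i ≠ 0) (hb : ∀ j, b j ≠ 0)
    (hform : ∀ i j, p i j = a i * exp (M i j / ε) * b j) :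
    ∑ i, ∑ j, τ i j * log (p i j) =
      ∑ i, (∑ j, τ i j) * log (a i) + (∑ i, ∑ j, τ i j * M i j) / ε
        + ∑ j, (∑ i, τ i j) * log (b j) := by
  simp only [hform, log_mul_exp_mul (ha _) (hb _), sum_sum_mul_add_add, mul_div_assoc',
    sum_div]

theorem sinkhorn_cross_entropy_value_identity_general (n m : ℕ)
    (C : Fin m → ℝ)
    (M : Matrix (Fin n) (Fin m) ℝ) (ε : ℝ) (hε : 0 < ε)
    (a : Fin n → ℝ) (b : Fin m → ℝ) (ha : ∀ i, 0 < a i) (hb : ∀ j, 0 < b j)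
    (πst : Matrix (Fin n) (Fin m) ℝ)
    (hform : ∀ i j, πst i j = a i * Real.exp (M i j / ε) * b j)
    (hπ : (∀ i j, πst i j ∈ Set.Icc (0 : ℝ) 1) ∧ (∀ i, ∑ j, πst i j = 1) ∧
      (∀ j, ∑ i, πst i j = C j))
    (σst : Matrix (Fin n) (Fin m) ℝ)
    (hσ : (∀ i j, σst i j ∈ Set.Icc (0 : ℝ) 1) ∧ (∀ i, ∑ j, σst i j = 1) ∧
      (∀ j, ∑ i, σst i j = C j)) :
    -∑ i, ∑ j, σst i j * Real.log (πst i j) =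
      -(∑ j, C j) + (1 / ε) *
        ((∑ i, ∑ j, πst i j * M i j)
          + ε * (-∑ i, ∑ j, πst i j * (Real.log (πst i j) - 1))
          - ∑ i, ∑ j, σst i j * M i j) := by
  obtain ⟨-, hπrow, hπcol⟩ := hπ
  obtain ⟨-, hσrow, hσcol⟩ := hσ
  have hlog (τ : Matrix (Fin n) (Fin m) ℝ) := sum_sum_mul_log_of_eq_mul_exp_mul (τ := τ)
    (fun i => (ha i).ne') (fun j => (hb j).ne') hform
  have hmass : ∑ i, ∑ j, πst i j = ∑ j, C j :=
    sum_comm.trans (sum_congr rfl fun j _ => hπcol j)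
  have hentropy : ∑ i, ∑ j, πst i j * (log (πst i j) - 1) =
      ∑ i, ∑ j, πst i j * log (πst i j) - ∑ j, C j := by
    simp only [mul_sub, mul_one, sum_sub_distrib, hmass]
  rw [hentropy, hlog σst, hlog πst]
  simp only [hπrow, hπcol, hσrow, hσcol]
  field_simp
  ring

theorem sinkhorn_cross_entropy_value_identity (n m : ℕ)
    (C : Fin m → ℝ) (hCpos : ∀ j, 0 ≤ C j) (hC : ∑ j, C j = (n : ℝ))
    (M : Matrix (Fin n) (Fin m) ℝ) (ε : ℝ) (hε : 0 < ε)
    (a : Fin n → ℝ) (b : Fin m → ℝ) (ha : ∀ i, 0 < a i) (hb : ∀ j, 0 < b j)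
    (πst : Matrix (Fin n) (Fin m) ℝ)
    (hform : ∀ i j, πst i j = a i * Real.exp (M i j / ε) * b j)
    (hπ : (∀ i j, πst i j ∈ Set.Icc (0 : ℝ) 1) ∧ (∀ i, ∑ j, πst i j = 1) ∧
      (∀ j, ∑ i, πst i j = C j))
    (σst : Matrix (Fin n) (Fin m) ℝ)
    (hσ : (∀ i j, σst i j ∈ Set.Icc (0 : ℝ) 1) ∧ (∀ i, ∑ j, σst i j = 1) ∧
      (∀ j, ∑ i, σst i j = C j)) :
    -∑ i, ∑ j, σst i j * Real.log (πst i j) =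
      -(∑ j, C j) + (1 / ε) *
        ((∑ i, ∑ j, πst i j * M i j)
          + ε * (-∑ i, ∑ j, πst i j * (Real.log (πst i j) - 1))
          - ∑ i, ∑ j, σst i j * M i j) :=
  sinkhorn_cross_entropy_value_identity_general n m C M ε hε a b ha hb πst hform hπ σst hσ
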